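/- Let ρ : ℝ → Matrix (ιA × ιB) (ιA × ιB) ℂ be entrywise differentiable at t₀ with derivative ρ', with ρ(t) Hermitian for every t, and suppose the partial transpose M := (ρ(t₀))^{T_B} is invertible. Then the negativity N(t) := (1/2)·(‖(ρ(t))^{T_B}‖₁ − 1) is differentiable at t₀ with derivative (1/2)·Re trace( M·|M|⁻¹ · (ρ')^{T_B} ), i.e. one half the trace of the matrix sign function of ρ(t₀)^{T_B} against the partial transpose of the derivative. -/

import Mathlib

open Matrix
open scoped ComplexOrder

/-- The matrix absolute value `|X|`: the unique positive semidefinite square root of `Xᴴ * X`. -/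
noncomputable def matAbs {n : Type*} [Fintype n] [DecidableEq n] (X : Matrix n n ℂ) :
    Matrix n n ℂ :=
  (Matrix.posSemidef_conjTranspose_mul_self X).1.eigenvectorUnitary.1 *
    diagonal ((↑) ∘ (Real.sqrt ∘ (Matrix.posSemidef_conjTranspose_mul_self X).1.eigenvalues)) *
    (star (Matrix.posSemidef_conjTranspose_mul_self X).1.eigenvectorUnitary : Matrix n n ℂ)

/-- The trace norm `‖X‖₁ = trace |X|` (a real number). -/
noncomputable def traceNorm {n : Type*} [Fintype n] [DecidableEq n] (X : Matrix n n ℂ) : ℝ :=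
  ((matAbs X).trace).re

/-- Partial transpose over the second tensor factor:
`ρ^{T_B} ((a,b),(a',b')) = ρ ((a,b'),(a',b))`. -/
def ptransB {ιA ιB : Type*} (ρ : Matrix (ιA × ιB) (ιA × ιB) ℂ) :
    Matrix (ιA × ιB) (ιA × ιB) ℂ :=
  Matrix.of fun p q => ρ (p.1, q.2) (q.1, p.2)

/-!
Write `B t := ρ(t)^{T_B}`, `M := B t₀`, `P := |M|` and `S := M P⁻¹`, the sign of `M`, which is
unitary. For every `t`,
  `Re tr (S B t) ≤ ‖B t‖₁ ≤ (Re tr (B t P⁻¹ B t) + tr P) / 2`: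
the left inequality because `Re tr (S Q) ≤ tr Q` for unitary `S` and `Q ≥ 0`, applied to the
positive and negative parts of `B t`; the right one by expanding
`tr ((|B t| - P) P⁻¹ (|B t| - P)) ≥ 0`. At `t₀` all three terms equal `tr P`, and the outer two
are polynomial in the entries of `B t` with the same derivative `Re tr (S B')` at `t₀` (as `P`
commutes with `M`), so the trace norm is squeezed between them.
-/

open scoped MatrixOrder

namespace Matrix

variable {n : Type*} [Fintype n]

theorem PosSemidef.two_mul_re_trace_mul_mul_conjTranspose_le {W : Matrix n n ℂ}
    (hW : W.PosSemidef) (X Y : Matrix n n ℂ) :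
    2 * (X * W * Yᴴ).trace.re ≤ (X * W * Xᴴ).trace.re + (Y * W * Yᴴ).trace.re := by
  have hnonneg : 0 ≤ ((X - Y) * W * (X - Y)ᴴ).trace.re :=
    (Complex.le_def.mp (hW.mul_mul_conjTranspose_same (X - Y)).trace_nonneg).1
  have hswap : (Y * W * Xᴴ).trace = star (X * W * Yᴴ).trace := by
    rw [← trace_conjTranspose, conjTranspose_mul, conjTranspose_mul, hW.1.eq,
      conjTranspose_conjTranspose, Matrix.mul_assoc]
  have hexpand : ((X - Y) * W * (X - Y)ᴴ).trace
      = (X * W * Xᴴ).trace - (X * W * Yᴴ).trace - (Y * W * Xᴴ).trace + (Y * W * Yᴴ).trace := by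
    simp only [conjTranspose_sub, sub_mul, mul_sub, trace_sub]
    ring
  rw [hexpand, hswap] at hnonneg
  simp only [Complex.add_re, Complex.sub_re, Complex.star_def, Complex.conj_re] at hnonneg
  linarith

variable [DecidableEq n]

theorem matAbs_eq_cfcAbs (X : Matrix n n ℂ) : matAbs X = CFC.abs X := by
  rw [CFC.abs, star_eq_conjTranspose,
    CFC.sqrt_eq_real_sqrt _ (posSemidef_conjTranspose_mul_self X).nonneg, cfcₙ_eq_cfc,
    (posSemidef_conjTranspose_mul_self X).1.cfc_eq]
  rfl

theorem PosSemidef.re_trace_unitary_mul_le {S Q : Matrix n n ℂ} (hS : S ∈ unitaryGroup n ℂ)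
    (hQ : Q.PosSemidef) : (S * Q).trace.re ≤ Q.trace.re := by
  set R := CFC.sqrt Q
  have hR : Rᴴ = R := (CFC.sqrt_nonneg Q).posSemidef.1.eq
  have hRR : R * R = Q := CFC.sqrt_mul_sqrt_self Q hQ.nonneg
  have hSS : star S * S = 1 := mem_unitaryGroup_iff'.mp hS
  have h := PosSemidef.one.two_mul_re_trace_mul_mul_conjTranspose_le (S * R) R
  have hXY : (S * R * 1 * Rᴴ).trace = (S * Q).trace := by
    rw [hR, Matrix.mul_one, Matrix.mul_assoc, hRR]
  have hXX : (S * R * 1 * (S * R)ᴴ).trace = Q.trace := by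
    rw [Matrix.mul_one, trace_mul_comm, conjTranspose_mul, hR, Matrix.mul_assoc,
      ← Matrix.mul_assoc Sᴴ, ← star_eq_conjTranspose, hSS, Matrix.one_mul, hRR]
  have hYY : (R * 1 * Rᴴ).trace = Q.trace := by rw [hR, Matrix.mul_one, hRR]
  rw [hXY, hXX, hYY] at h
  linarith

theorem IsHermitian.re_trace_unitary_mul_le_traceNorm {S A : Matrix n n ℂ} (hA : A.IsHermitian)
    (hS : S ∈ unitaryGroup n ℂ) : (S * A).trace.re ≤ traceNorm A := by
  have hA' : IsSelfAdjoint A := hA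
  have hpos := (CFC.posPart_nonneg A).posSemidef.re_trace_unitary_mul_le hS
  have hneg := (CFC.negPart_nonneg A).posSemidef.re_trace_unitary_mul_le (-⟨S, hS⟩ : unitary _).2
  have hsplit : S * A = S * A⁺ - S * A⁻ := by rw [← mul_sub, CFC.posPart_sub_negPart A]
  rw [traceNorm, matAbs_eq_cfcAbs, ← CFC.posPart_add_negPart A, hsplit]
  simp only [Unitary.coe_neg, Matrix.neg_mul, trace_neg, trace_sub, trace_add,
    Complex.neg_re, Complex.sub_re, Complex.add_re] at hneg ⊢
  linarith

theorem PosDef.two_mul_traceNorm_le {P : Matrix n n ℂ} (hP : P.PosDef) (A : Matrix n n ℂ) :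
    2 * traceNorm A ≤ (A * P⁻¹ * Aᴴ).trace.re + P.trace.re := by
  have hT : (CFC.abs A)ᴴ = CFC.abs A := (CFC.abs_nonneg A).posSemidef.1.eq
  have hPdet : IsUnit P.det := (isUnit_iff_isUnit_det P).mp hP.isUnit
  have h := hP.inv.posSemidef.two_mul_re_trace_mul_mul_conjTranspose_le (CFC.abs A) P
  have hXY : (CFC.abs A * P⁻¹ * Pᴴ).trace = (matAbs A).trace := by
    rw [hP.1.eq, Matrix.mul_assoc, nonsing_inv_mul P hPdet, Matrix.mul_one, matAbs_eq_cfcAbs]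
  have hXX : (CFC.abs A * P⁻¹ * (CFC.abs A)ᴴ).trace = (A * P⁻¹ * Aᴴ).trace := by
    rw [hT, trace_mul_cycle, CFC.abs_mul_abs, star_eq_conjTranspose, ← trace_mul_cycle]
  have hYY : (P * P⁻¹ * Pᴴ).trace = P.trace := by
    rw [hP.1.eq, mul_nonsing_inv P hPdet, Matrix.one_mul]
  rw [hXY, hXX, hYY] at h
  exact h

section Invertible

variable {M : Matrix n n ℂ} (hM : M.IsHermitian) (hMu : IsUnit M)
include hM

theorem IsHermitian.matAbs_mul_self : matAbs M * matAbs M = M * M := by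
  rw [matAbs_eq_cfcAbs, CFC.abs_mul_abs, star_eq_conjTranspose, hM.eq]

include hMu

theorem IsHermitian.posDef_matAbs : (matAbs M).PosDef := by
  rw [matAbs_eq_cfcAbs, (CFC.abs_nonneg M).posSemidef.posDef_iff_isUnit, isUnit_iff_isUnit_det,
    hM.det_abs]
  simpa [isUnit_iff_ne_zero] using (isUnit_iff_isUnit_det M).mp hMu

theorem IsHermitian.isUnit_det_matAbs : IsUnit (matAbs M).det :=
  (isUnit_iff_isUnit_det _).mp (hM.posDef_matAbs hMu).isUnit

theorem IsHermitian.mul_inv_matAbs_mem_unitaryGroup : M * (matAbs M)⁻¹ ∈ unitaryGroup n ℂ := by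
  rw [mem_unitaryGroup_iff', star_eq_conjTranspose, conjTranspose_mul, conjTranspose_nonsing_inv,
    (hM.posDef_matAbs hMu).1.eq, hM.eq, Matrix.mul_assoc, ← Matrix.mul_assoc M,
    ← hM.matAbs_mul_self, Matrix.mul_assoc, mul_nonsing_inv _ (hM.isUnit_det_matAbs hMu),
    Matrix.mul_one, nonsing_inv_mul _ (hM.isUnit_det_matAbs hMu)]

theorem IsHermitian.commute_inv_matAbs : Commute M (matAbs M)⁻¹ := by
  have hPdet := hM.isUnit_det_matAbs hMu
  have hPM : matAbs M * M = M * matAbs M := by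
    have hM' : IsSelfAdjoint M := hM
    rw [matAbs_eq_cfcAbs]
    exact CFC.commute_abs_self M
  calc M * (matAbs M)⁻¹ = (matAbs M)⁻¹ * (matAbs M * M) * (matAbs M)⁻¹ := by
        rw [← Matrix.mul_assoc, nonsing_inv_mul _ hPdet, Matrix.one_mul]
    _ = (matAbs M)⁻¹ * M := by
        rw [hPM, Matrix.mul_assoc, Matrix.mul_assoc, mul_nonsing_inv _ hPdet, Matrix.mul_one]

theorem IsHermitian.trace_mul_inv_matAbs_mul :
    (M * (matAbs M)⁻¹ * M).trace = (matAbs M).trace := by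
  rw [trace_mul_cycle, ← hM.matAbs_mul_self, Matrix.mul_assoc,
    mul_nonsing_inv _ (hM.isUnit_det_matAbs hMu), Matrix.mul_one]

end Invertible

theorem IsHermitian.ptransB {ιA ιB : Type*} {ρ : Matrix (ιA × ιB) (ιA × ιB) ℂ}
    (hρ : ρ.IsHermitian) : (ptransB ρ).IsHermitian := by
  ext p q
  simpa [_root_.ptransB] using (congrArg star (hρ.apply (q.1, p.2) (p.1, q.2))).symm

end Matrix

section EntrywiseDeriv

variable {𝕜 R : Type*} [NontriviallyNormedField 𝕜] [NormedRing R] [NormedAlgebra 𝕜 R]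
  {l m n : Type*} [Fintype m] {x : 𝕜}

theorem hasDerivAt_matrix_mul_apply {X : 𝕜 → Matrix l m R} {Y : 𝕜 → Matrix m n R}
    {X' : Matrix l m R} {Y' : Matrix m n R}
    (hX : ∀ i j, HasDerivAt (fun t => X t i j) (X' i j) x)
    (hY : ∀ i j, HasDerivAt (fun t => Y t i j) (Y' i j) x) (i : l) (j : n) :
    HasDerivAt (fun t => (X t * Y t) i j) ((X' * Y x + X x * Y') i j) x := by
  simp only [Matrix.add_apply, Matrix.mul_apply, ← Finset.sum_add_distrib]
  exact HasDerivAt.fun_sum fun k _ => (hX i k).fun_mul (hY k j)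

theorem hasDerivAt_matrix_trace [Fintype n] {X : 𝕜 → Matrix n n R} {X' : Matrix n n R}
    (hX : ∀ i j, HasDerivAt (fun t => X t i j) (X' i j) x) :
    HasDerivAt (fun t => (X t).trace) X'.trace x :=
  HasDerivAt.fun_sum fun i _ => hX i i

end EntrywiseDeriv

theorem hasDerivAt_of_le_of_le {f g h : ℝ → ℝ} {D x : ℝ} (hg : HasDerivAt g D x)
    (hh : HasDerivAt h D x) (hgf : ∀ᶠ t in nhds x, g t ≤ f t) (hfh : ∀ᶠ t in nhds x, f t ≤ h t)
    (hgx : g x = f x) (hhx : h x = f x) : HasDerivAt f D x := by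
  rw [hasDerivAt_iff_isLittleO, hgx] at hg
  rw [hasDerivAt_iff_isLittleO, hhx] at hh
  rw [hasDerivAt_iff_isLittleO]
  refine (Asymptotics.IsBigO.of_bound' ?_).trans_isLittleO (hg.norm_left.add hh.norm_left)
  filter_upwards [hgf, hfh] with t hgft hfht
  simp only [Real.norm_eq_abs]
  refine (abs_le.mpr ⟨?_, ?_⟩).trans (le_abs_self _) <;>
    linarith [neg_abs_le (g t - f x - (t - x) • D), le_abs_self (h t - f x - (t - x) • D),
      abs_nonneg (g t - f x - (t - x) • D), abs_nonneg (h t - f x - (t - x) • D)]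

theorem hasDerivAt_traceNorm {n : Type*} [Fintype n] [DecidableEq n] {B : ℝ → Matrix n n ℂ}
    {B' : Matrix n n ℂ} {t₀ : ℝ} (hB : ∀ i j, HasDerivAt (fun t => B t i j) (B' i j) t₀)
    (hherm : ∀ᶠ t in nhds t₀, (B t).IsHermitian) (hunit : IsUnit (B t₀)) :
    HasDerivAt (fun t => traceNorm (B t)) (B t₀ * (matAbs (B t₀))⁻¹ * B').trace.re t₀ := by
  set M := B t₀ with hMdef
  set P := matAbs M
  have hM : M.IsHermitian := hherm.self_of_nhds
  have hconst (C : Matrix n n ℂ) :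
      ∀ i j, HasDerivAt (fun _ : ℝ => C i j) ((0 : Matrix n n ℂ) i j) t₀ :=
    fun i j => hasDerivAt_const t₀ _
  have hswap : (B' * P⁻¹ * M).trace = (M * P⁻¹ * B').trace := by
    rw [Matrix.mul_assoc, ← (hM.commute_inv_matAbs hunit).eq, trace_mul_comm]
  have hlow : HasDerivAt (fun t => (M * P⁻¹ * B t).trace.re) (M * P⁻¹ * B').trace.re t₀ := by
    simpa [Function.comp_def] using Complex.reCLM.hasFDerivAt.comp_hasDerivAt t₀
      (hasDerivAt_matrix_trace (hasDerivAt_matrix_mul_apply (hconst (M * P⁻¹)) hB))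
  have hup : HasDerivAt (fun t => ((B t * P⁻¹ * B t).trace.re + P.trace.re) / 2)
      (M * P⁻¹ * B').trace.re t₀ := by
    simpa [Function.comp_def, ← hMdef, hswap, add_self_div_two] using
      ((Complex.reCLM.hasFDerivAt.comp_hasDerivAt t₀ (hasDerivAt_matrix_trace
        (hasDerivAt_matrix_mul_apply (hasDerivAt_matrix_mul_apply hB (hconst P⁻¹)) hB))).add_const
          P.trace.re).div_const 2
  have hvalue : (M * P⁻¹ * M).trace.re = traceNorm M := by
    rw [hM.trace_mul_inv_matAbs_mul hunit]
    rfl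
  refine hasDerivAt_of_le_of_le hlow hup ?_ ?_ hvalue (by rw [hvalue]; exact add_self_div_two _)
  · filter_upwards [hherm] with t ht
    exact ht.re_trace_unitary_mul_le_traceNorm (hM.mul_inv_matAbs_mem_unitaryGroup hunit)
  · filter_upwards [hherm] with t ht
    have := (hM.posDef_matAbs hunit).two_mul_traceNorm_le (B t)
    rw [ht.eq] at this
    linarith

theorem negativity_hasDerivAt_general {ιA ιB : Type*}
    [Fintype ιA] [DecidableEq ιA]
    [Fintype ιB] [DecidableEq ιB]
    (ρ : ℝ → Matrix (ιA × ιB) (ιA × ιB) ℂ) (ρ' : Matrix (ιA × ιB) (ιA × ιB) ℂ) (t₀ : ℝ)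
    (hderiv : ∀ p q, HasDerivAt (fun t => ρ t p q) (ρ' p q) t₀)
    (hherm : ∀ t, (ρ t).IsHermitian)
    (M : Matrix (ιA × ιB) (ιA × ιB) ℂ) (hM : M = ptransB (ρ t₀))
    (hMinv : IsUnit M) :
    HasDerivAt (fun t => (1 / 2 : ℝ) * (traceNorm (ptransB (ρ t)) - 1))
      ((1 / 2 : ℝ) * ((M * (matAbs M)⁻¹ * ptransB ρ').trace).re) t₀ := by
  have h := hasDerivAt_traceNorm (B := fun t => ptransB (ρ t)) (B' := ptransB ρ')
    (fun p q => hderiv _ _) (.of_forall fun t => (hherm t).ptransB) (hM ▸ hMinv)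
  rw [← hM] at h
  exact (h.sub_const 1).const_mul (1 / 2 : ℝ)

/-- **First derivative of the entanglement negativity.**
If `ρ : ℝ → Matrix (ιA × ιB) (ιA × ιB) ℂ` is entrywise differentiable at `t₀` with derivative
`ρ'`, each `ρ t` is Hermitian, and the partial transpose `M = (ρ t₀)^{T_B}` is invertible, then
the negativity `N(t) = (1/2)·(‖(ρ t)^{T_B}‖₁ − 1)` is differentiable at `t₀` with derivative
`(1/2)·Re trace (M·|M|⁻¹·(ρ')^{T_B})`. -/
theorem negativity_hasDerivAt {ιA ιB : Type*}
    [Fintype ιA] [DecidableEq ιA] [Nonempty ιA]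
    [Fintype ιB] [DecidableEq ιB] [Nonempty ιB]
    (ρ : ℝ → Matrix (ιA × ιB) (ιA × ιB) ℂ) (ρ' : Matrix (ιA × ιB) (ιA × ιB) ℂ) (t₀ : ℝ)
    (hderiv : ∀ p q, HasDerivAt (fun t => ρ t p q) (ρ' p q) t₀)
    (hherm : ∀ t, (ρ t).IsHermitian)
    (M : Matrix (ιA × ιB) (ιA × ιB) ℂ) (hM : M = ptransB (ρ t₀))
    (hMinv : IsUnit M) :
    HasDerivAt (fun t => (1 / 2 : ℝ) * (traceNorm (ptransB (ρ t)) - 1))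
      ((1 / 2 : ℝ) * ((M * (matAbs M)⁻¹ * ptransB ρ').trace).re) t₀ :=
  negativity_hasDerivAt_general ρ ρ' t₀ hderiv hherm M hM hMinv
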